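/- Let F ∈ B_c and u(x,t) = ∫_ℝ F(x−ξ) Θ_t'(ξ) dξ for t > 0. Then the initial data F' is taken on in the Alexiewicz norm: sup_{x<y} | ∫_x^y u(ξ,t) dξ − (F(y) − F(x)) | → 0 as t → 0⁺. -/

import Mathlib

/-!
Let `U_t = F ∗ Θ_t` be the heat flow of `F` itself. Fubini's theorem and the fundamental theorem of
calculus for `Θ_t` move the derivative off the kernel: `∫_x^y u(·,t) = U_t(y) − U_t(x)`, so the
quantity under the supremum is at most `2 sup |U_t − F|`. Now `F ∈ B_c` is bounded and uniformly
continuous, and `Θ_t` is the Gaussian density of variance `2t`, whose mass outside `[−δ, δ]` is at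
most `2t/δ²` by Chebyshev's inequality; hence `U_t → F` uniformly as `t → 0⁺`.
-/

open MeasureTheory Filter Topology

/-- The Gauss–Weierstrass heat kernel `Θ_t(x) = (4πt)^(−1/2) exp(−x²/(4t))` for `t > 0`. -/
noncomputable def heatK (t x : ℝ) : ℝ :=
  (Real.sqrt (4 * Real.pi * t))⁻¹ * Real.exp (-x ^ 2 / (4 * t))

/-- Spatial derivative of the heat kernel: `Θ_t'(ξ) = −ξ Θ_t(ξ)/(2t)`. -/
noncomputable def heatK' (t x : ℝ) : ℝ := -x * heatK t x / (2 * t)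

/-- `F ∈ B_c`: continuous, vanishing at `−∞`, with a finite limit at `+∞`. -/
def memBc (F : ℝ → ℝ) : Prop :=
  Continuous F ∧ Tendsto F atBot (nhds (0 : ℝ)) ∧ ∃ L : ℝ, Tendsto F atTop (nhds L)

/-- Heat convolution `u(x,t) = ∫ F(x−ξ) Θ_t'(ξ) dξ` of the distribution `f = F'`. -/
noncomputable def heatConv (F : ℝ → ℝ) (t x : ℝ) : ℝ := ∫ ξ : ℝ, F (x - ξ) * heatK' t ξ

open ProbabilityTheory

lemma heatK_eq_gaussianPDFReal {t : ℝ} (ht : 0 ≤ t) :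
    heatK t = gaussianPDFReal 0 (2 * t).toNNReal := by
  ext x
  rw [heatK, gaussianPDFReal, Real.coe_toNNReal _ (by positivity)]
  ring_nf

lemma heatK_nonneg (t x : ℝ) : 0 ≤ heatK t x := by
  unfold heatK; positivity

@[fun_prop]
lemma continuous_heatK (t : ℝ) : Continuous (heatK t) := by
  unfold heatK; fun_prop

lemma integrable_heatK {t : ℝ} (ht : 0 ≤ t) : Integrable (heatK t) := by
  rw [heatK_eq_gaussianPDFReal ht]; exact integrable_gaussianPDFReal _ _

lemma integral_heatK {t : ℝ} (ht : 0 < t) : ∫ x, heatK t x = 1 := by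
  rw [heatK_eq_gaussianPDFReal ht.le]
  exact integral_gaussianPDFReal_eq_one _ (by simpa using ht)

lemma hasDerivAt_heatK {t : ℝ} (ht : 0 < t) (x : ℝ) : HasDerivAt (heatK t) (heatK' t x) x := by
  have h : HasDerivAt (fun x => -x ^ 2 / (4 * t)) (-(2 * x) / (4 * t)) x := by
    simpa using (hasDerivAt_pow 2 x).neg.div_const (4 * t)
  refine (h.exp.const_mul _).congr_deriv ?_
  simp only [heatK', heatK]; field_simp; ring

@[fun_prop]
lemma continuous_heatK' (t : ℝ) : Continuous (heatK' t) := by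
  unfold heatK'; fun_prop

lemma integrable_heatK' {t : ℝ} (ht : 0 < t) : Integrable (heatK' t) := by
  have h := (integrable_mul_exp_neg_mul_sq (b := 1 / (4 * t)) (by positivity)).const_mul
    (-(Real.sqrt (4 * Real.pi * t))⁻¹ / (2 * t))
  convert h using 2 with x
  simp only [heatK', heatK]; field_simp

lemma setIntegral_heatK_abs_ge_le {t δ : ℝ} (ht : 0 < t) (hδ : 0 < δ) :
    ∫ η in {η | δ ≤ |η|}, heatK t η ≤ 2 * t / δ ^ 2 := by
  have hv : (2 * t).toNNReal ≠ 0 := by simpa using ht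
  have hcheb :=
    meas_ge_le_variance_div_sq (memLp_id_gaussianReal (μ := 0) (v := (2 * t).toNNReal) 2) hδ
  simp only [id, integral_id_gaussianReal, sub_zero, variance_id_gaussianReal,
    Real.coe_toNNReal _ (by positivity : 0 ≤ 2 * t)] at hcheb
  rw [gaussianReal_apply_eq_integral _ hv, ← heatK_eq_gaussianPDFReal ht.le] at hcheb
  exact (ENNReal.ofReal_le_ofReal_iff (by positivity)).1 hcheb

lemma Continuous.uniformContinuous_of_tendsto_atBot_atTop {E : Type*} [NormedAddCommGroup E]
    [NormedSpace ℝ E] {F : ℝ → E} (hF : Continuous F) {a b : E}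
    (ha : Tendsto F atBot (𝓝 a)) (hb : Tendsto F atTop (𝓝 b)) : UniformContinuous F := by
  set P : ℝ → ℝ := fun x => Set.projIcc 0 1 zero_le_one x
  have hP : UniformContinuous P :=
    uniformContinuous_subtype_val.comp (LipschitzWith.projIcc zero_le_one).uniformContinuous
  have hPbot : Tendsto P atBot (𝓝 0) :=
    tendsto_const_nhds.congr' <| (eventually_le_atBot 0).mono fun x hx => by
      simp [P, Set.projIcc_of_le_left _ hx]
  have hPtop : Tendsto P atTop (𝓝 1) :=
    tendsto_const_nhds.congr' <| (eventually_ge_atTop 1).mono fun x hx => by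
      simp [P, Set.projIcc_of_right_le _ hx]
  set S : ℝ → E := fun x => a + P x • (b - a)
  have hS : UniformContinuous S :=
    uniformContinuous_const.add
      ((ContinuousLinearMap.toSpanSingleton ℝ (b - a)).uniformContinuous.comp hP)
  have hS_lim {l : Filter ℝ} {c : ℝ} (hc : Tendsto P l (𝓝 c)) :
      Tendsto S l (𝓝 (a + c • (b - a))) :=
    tendsto_const_nhds.add (hc.smul_const (b - a))
  have hG : Tendsto (F - S) (cocompact ℝ) (𝓝 0) := by
    rw [cocompact_eq_atBot_atTop, tendsto_sup]
    constructor
    · simpa [Pi.sub_def] using ha.sub (hS_lim hPbot)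
    · simpa [Pi.sub_def] using hb.sub (hS_lim hPtop)
  simpa using ((hF.sub hS.continuous).uniformContinuous_of_tendsto_cocompact hG).add hS

lemma memBc.exists_abs_le {F : ℝ → ℝ} (hF : memBc F) : ∃ C, ∀ x, |F x| ≤ C := by
  obtain ⟨hc, hbot, L, htop⟩ := hF
  have h := hc.isBounded_range_iff_isBigO_atTop_atBot.2 ⟨htop.isBigO_one ℝ, hbot.isBigO_one ℝ⟩
  simpa using (isBounded_iff_forall_norm_le.1 h)

lemma memBc.uniformContinuous {F : ℝ → ℝ} (hF : memBc F) : UniformContinuous F :=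
  let ⟨hc, hbot, _, htop⟩ := hF
  hc.uniformContinuous_of_tendsto_atBot_atTop hbot htop

noncomputable def heatFlow (F : ℝ → ℝ) (t x : ℝ) : ℝ := ∫ η, F (x - η) * heatK t η

lemma heatConv_eq_integral (F : ℝ → ℝ) (t ξ : ℝ) :
    heatConv F t ξ = ∫ s, F s * heatK' t (ξ - s) := by
  rw [heatConv, ← integral_sub_left_eq_self _ volume ξ]
  simp only [sub_sub_cancel]

lemma heatFlow_eq_integral (F : ℝ → ℝ) (t x : ℝ) :
    heatFlow F t x = ∫ s, F s * heatK t (x - s) := by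
  rw [heatFlow, ← integral_sub_left_eq_self _ volume x]
  simp only [sub_sub_cancel]

section Convolution

variable {F : ℝ → ℝ} {C t : ℝ}

lemma MeasureTheory.Integrable.bdd_mul_comp_sub {g : ℝ → ℝ} (hg : Integrable g)
    (hFc : Continuous F) (hC : ∀ x, |F x| ≤ C) (x : ℝ) : Integrable (fun s => F s * g (x - s)) :=
  (hg.comp_sub_left x).bdd_mul hFc.aestronglyMeasurable (ae_of_all _ hC)

lemma integral_heatK'_comp_sub {t : ℝ} (ht : 0 < t) (x y s : ℝ) :
    ∫ ξ in x..y, heatK' t (ξ - s) = heatK t (y - s) - heatK t (x - s) := by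
  rw [intervalIntegral.integral_comp_sub_right (heatK' t)]
  exact intervalIntegral.integral_eq_sub_of_hasDerivAt (fun η _ => hasDerivAt_heatK ht η)
    ((continuous_heatK' t).intervalIntegrable _ _)

lemma integrable_prod_heatK' (hFc : Continuous F) (hC : ∀ x, |F x| ≤ C) (ht : 0 < t)
    (x y : ℝ) :
    Integrable (fun p : ℝ × ℝ => F p.2 * heatK' t (p.1 - p.2))
      ((volume.restrict (Set.Ioc x y)).prod volume) := by
  have hmeas : AEStronglyMeasurable (fun p : ℝ × ℝ => F p.2 * heatK' t (p.1 - p.2))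
      ((volume.restrict (Set.Ioc x y)).prod volume) := by
    apply Continuous.aestronglyMeasurable; fun_prop
  refine (integrable_prod_iff hmeas).2 ⟨ae_of_all _ fun ξ =>
    (integrable_heatK' ht).bdd_mul_comp_sub hFc hC ξ, ?_⟩
  refine (integrable_const (C * ∫ s, ‖heatK' t s‖)).mono' hmeas.norm.integral_prod_right' <|
    ae_of_all _ fun ξ => ?_
  rw [Real.norm_of_nonneg (integral_nonneg fun _ => norm_nonneg _), ← integral_const_mul,
    ← integral_sub_left_eq_self (fun s => C * ‖heatK' t s‖) volume ξ]
  refine integral_mono_of_nonneg (ae_of_all _ fun _ => norm_nonneg _)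
    (((integrable_heatK' ht).norm.comp_sub_left ξ).const_mul C) (ae_of_all _ fun s => ?_)
  dsimp only
  rw [norm_mul, Real.norm_eq_abs]
  exact mul_le_mul_of_nonneg_right (hC s) (norm_nonneg _)

lemma integral_heatConv (hFc : Continuous F) (hC : ∀ x, |F x| ≤ C) (ht : 0 < t) {x y : ℝ}
    (hxy : x ≤ y) :
    ∫ ξ in x..y, heatConv F t ξ = heatFlow F t y - heatFlow F t x := by
  have hint (z : ℝ) := (integrable_heatK ht.le).bdd_mul_comp_sub hFc hC z
  calc ∫ ξ in x..y, heatConv F t ξ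
      = ∫ ξ in Set.Ioc x y, ∫ s, F s * heatK' t (ξ - s) := by
        simp only [intervalIntegral.integral_of_le hxy, heatConv_eq_integral]
    _ = ∫ s, ∫ ξ in Set.Ioc x y, F s * heatK' t (ξ - s) :=
        integral_integral_swap (integrable_prod_heatK' hFc hC ht x y)
    _ = ∫ s, (F s * heatK t (y - s) - F s * heatK t (x - s)) := by
        congr 1 with s
        rw [integral_const_mul, ← intervalIntegral.integral_of_le hxy,
          integral_heatK'_comp_sub ht, mul_sub]
    _ = heatFlow F t y - heatFlow F t x := by
        rw [integral_sub (hint y) (hint x), heatFlow_eq_integral, heatFlow_eq_integral]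

end Convolution

section ApproximateIdentity

variable {g : ℝ → ℝ} {C t : ℝ}

lemma heatFlow_sub_eq_integral (hgc : Continuous g) (hC : ∀ x, |g x| ≤ C) (ht : 0 < t)
    (x : ℝ) : heatFlow g t x - g x = ∫ η, (g (x - η) - g x) * heatK t η := by
  have hint : Integrable (fun η => g (x - η) * heatK t η) :=
    (integrable_heatK ht.le).bdd_mul (by fun_prop) (ae_of_all _ fun η => hC (x - η))
  simp_rw [sub_mul]
  rw [integral_sub hint ((integrable_heatK ht.le).const_mul _), integral_const_mul,
    integral_heatK ht, mul_one, heatFlow]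

lemma abs_heatFlow_sub_le (hgc : Continuous g) (hC : ∀ x, |g x| ≤ C) (ht : 0 < t) {x δ ε : ℝ}
    (hδ : 0 < δ) (hε : ∀ η, |η| < δ → |g (x - η) - g x| ≤ ε) :
    |heatFlow g t x - g x| ≤ ε + 2 * C * (2 * t / δ ^ 2) := by
  have hε0 : 0 ≤ ε := (abs_nonneg _).trans (hε 0 (by simpa using hδ))
  have hC0 : 0 ≤ C := (abs_nonneg _).trans (hC 0)
  set S := {η : ℝ | δ ≤ |η|}
  have hS : MeasurableSet S := measurableSet_le measurable_const measurable_abs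
  have hK := integrable_heatK ht.le
  have hg2 (η : ℝ) : |g (x - η) - g x| ≤ 2 * C := by
    linarith [abs_sub (g (x - η)) (g x), hC (x - η), hC x]
  have hbound (η : ℝ) :
      |(g (x - η) - g x) * heatK t η| ≤ ε * heatK t η + 2 * C * S.indicator (heatK t) η := by
    rw [abs_mul, abs_of_nonneg (heatK_nonneg t η)]
    by_cases hη : η ∈ S
    · rw [S.indicator_of_mem hη]
      nlinarith [heatK_nonneg t η, hg2 η]
    · rw [S.indicator_of_notMem hη, mul_zero, add_zero]
      exact mul_le_mul_of_nonneg_right (hε η (not_le.1 hη)) (heatK_nonneg t η)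
  rw [heatFlow_sub_eq_integral hgc hC ht]
  calc |∫ η, (g (x - η) - g x) * heatK t η|
      ≤ ∫ η, |(g (x - η) - g x) * heatK t η| := abs_integral_le_integral_abs
    _ ≤ ∫ η, (ε * heatK t η + 2 * C * S.indicator (heatK t) η) :=
        integral_mono (hK.bdd_mul (c := 2 * C) (by fun_prop) (ae_of_all _ hg2)).abs
          ((hK.const_mul _).add ((hK.indicator hS).const_mul _)) hbound
    _ = ε + 2 * C * ∫ η in S, heatK t η := by
        rw [integral_add (hK.const_mul _) ((hK.indicator hS).const_mul _), integral_const_mul,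
          integral_const_mul, integral_heatK ht, mul_one, integral_indicator hS]
    _ ≤ ε + 2 * C * (2 * t / δ ^ 2) := by
        gcongr; exact setIntegral_heatK_abs_ge_le ht hδ

lemma tendstoUniformly_heatFlow (hg : UniformContinuous g) (hC : ∀ x, |g x| ≤ C) :
    TendstoUniformly (heatFlow g) g (𝓝[>] 0) := by
  rw [Metric.tendstoUniformly_iff]
  intro ε hε
  obtain ⟨δ, hδ, hgδ⟩ := Metric.uniformContinuous_iff.1 hg (ε / 2) (by positivity)
  have htail : Tendsto (fun t => 2 * C * (2 * t / δ ^ 2)) (𝓝[>] 0) (𝓝 0) :=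
    tendsto_nhdsWithin_of_tendsto_nhds (Continuous.tendsto' (by fun_prop) 0 0 (by simp))
  filter_upwards [htail.eventually_lt_const (by positivity : 0 < ε / 2), self_mem_nhdsWithin]
    with t htail ht x
  have h := abs_heatFlow_sub_le hg.continuous hC ht hδ (x := x) fun η hη =>
    (hgδ (by simpa [Real.dist_eq] using hη)).le
  rw [dist_comm, Real.dist_eq]
  linarith

end ApproximateIdentity

/-- The initial data `F'` is taken on in the Alexiewicz norm:
`sup_{x<y} |∫_x^y u(ξ,t) dξ − (F(y) − F(x))| → 0` as `t → 0⁺`. -/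
theorem stmt4 (F : ℝ → ℝ) (hF : memBc F) :
    Tendsto (fun t : ℝ => sSup {r : ℝ | ∃ x y : ℝ, x < y ∧
        r = |(∫ ξ in x..y, heatConv F t ξ) - (F y - F x)|})
      (nhdsWithin 0 (Set.Ioi 0)) (nhds 0) := by
  obtain ⟨C, hC⟩ := hF.exists_abs_le
  have hclose := Metric.tendstoUniformly_iff.1 (tendstoUniformly_heatFlow hF.uniformContinuous hC)
  rw [Metric.tendsto_nhds]
  intro ε hε
  filter_upwards [hclose (ε / 3) (by positivity), self_mem_nhdsWithin] with t hclose ht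
  set S := {r : ℝ | ∃ x y : ℝ, x < y ∧ r = |(∫ ξ in x..y, heatConv F t ξ) - (F y - F x)|}
  have hnonneg : ∀ r ∈ S, 0 ≤ r := by
    rintro _ ⟨x, y, -, rfl⟩
    exact abs_nonneg _
  have hbound : ∀ r ∈ S, r ≤ 2 * (ε / 3) := by
    rintro _ ⟨x, y, hxy, rfl⟩
    have hx := hclose x
    have hy := hclose y
    rw [Real.dist_eq, abs_lt] at hx hy
    rw [integral_heatConv hF.1 hC ht hxy.le, abs_le]
    constructor <;> linarith
  rw [Real.dist_eq, sub_zero, abs_of_nonneg (Real.sSup_nonneg hnonneg)]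
  exact (Real.sSup_le hbound (by positivity)).trans_lt (by linarith)
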